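/- arXiv:2305.17757 — 2 statements merged into one kernel-verified Lean document; each statement's English description precedes it below -/
import Mathlib

section
/- Key counting inequality for the symmetric price of anarchy bound: let C be an equilibrium with an empty node v adjacent to x_T agents of each type T, with x = Σ_T x_T ≥ 2. Then every agent of type T adjacent to v has utility at least (x − x_T)/(x − 1) and every agent of type T not adjacent to v has utility at least (x − x_T)/x, and consequently SW(C) ≥ n − (1/x) Σ_T n_T x_T, where n_T is the number of agents of type T. -/
open Finset

variable {V τ : Type}

open Classical in
noncomputable def occNbrs [Fintype V] (G : SimpleGraph V) (C : V → Option τ) (v : V) :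
    Finset V :=
  Finset.univ.filter (fun u => G.Adj v u ∧ (C u).isSome)

open Classical in
noncomputable def diffNbrs [Fintype V] (G : SimpleGraph V) (C : V → Option τ) (v : V)
    (t : τ) : Finset V :=
  Finset.univ.filter (fun u => G.Adj v u ∧ ∃ s, C u = some s ∧ s ≠ t)

/-- Utility of the agent at node `v`: fraction of occupied neighbors of different type. -/
noncomputable def util [Fintype V] (G : SimpleGraph V) (C : V → Option τ) (v : V) : ℚ :=
  match C v with
  | none => 0
  | some t =>
      if (occNbrs G C v).card = 0 then 0
      else ((diffNbrs G C v t).card : ℚ) / ((occNbrs G C v).card : ℚ)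

/-- The assignment after the agent at `u` jumps to node `w`. -/
def move [DecidableEq V] (C : V → Option τ) (u w : V) : V → Option τ :=
  fun x => if x = w then C u else if x = u then none else C x

/-- An improving move: the agent at `u` jumps to the empty node `w`, strictly increasing
its utility. -/
def Improves [Fintype V] [DecidableEq V] (G : SimpleGraph V) (C : V → Option τ)
    (u w : V) : Prop :=
  (C u).isSome ∧ C w = none ∧ util G C u < util G (move C u w) w

/-- Pure Nash equilibrium: no agent can strictly improve by jumping to an empty node. -/
def IsEquil [Fintype V] [DecidableEq V] (G : SimpleGraph V) (C : V → Option τ) : Prop :=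
  ∀ u w : V, (C u).isSome → C w = none → util G (move C u w) w ≤ util G C u

/-- Social welfare: sum of agents' utilities. -/
noncomputable def SW [Fintype V] (G : SimpleGraph V) (C : V → Option τ) : ℚ :=
  ∑ v, util G C v

open Classical in
noncomputable def pw (C : V → Option τ) (m : ℚ) (u v : V) : ℚ :=
  if (C u).isNone ∨ (C v).isNone then m
  else if C u = C v then 1 else 0

open Classical in
/-- The potential function: sum over edges, weight 1 for same-type endpoints,
`m` if an endpoint is unoccupied, 0 for different-type endpoints. -/
noncomputable def potential [Fintype V] (G : SimpleGraph V) (C : V → Option τ)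
    (m : ℚ) : ℚ :=
  (∑ p : V × V, if G.Adj p.1 p.2 then pw C m p.1 p.2 else 0) / 2

open Classical in
noncomputable def countType [Fintype V] (C : V → Option τ) (t : τ) : ℕ :=
  (Finset.univ.filter (fun v => C v = some t)).card

open Classical in
noncomputable def emptyCount [Fintype V] (C : V → Option τ) : ℕ :=
  (Finset.univ.filter (fun v => C v = none)).card

/-!
If the agent of type `t` at `u` jumped to the empty node `v`, it would see the `x - x_t` agents of
other types around `v` among `x - 1` occupied neighbours if `u` is adjacent to `v`, and among `x`
otherwise. At an equilibrium its current utility is at least that. The weaker bound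
`(x - x_t) / x` holds for every agent of type `t`, and summing it over all agents gives the
welfare bound.
-/

section Jump

variable [Fintype V] (G : SimpleGraph V) (C : V → Option τ)

open Classical in
noncomputable def sameNbrs (v : V) (t : τ) : Finset V :=
  Finset.univ.filter (fun u => G.Adj v u ∧ C u = some t)

lemma util_nonneg (u : V) : 0 ≤ util G C u := by
  unfold util
  split
  · exact le_rfl
  · split <;> positivity

-- The guard `card = 0` in `util` is redundant, since `a / 0 = 0` in `ℚ`.
lemma util_of_eq_some {u : V} {t : τ} (hu : C u = some t) :
    util G C u = (diffNbrs G C u t).card / (occNbrs G C u).card := by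
  simp only [util, hu]
  split_ifs with h <;> simp [h]

lemma card_diffNbrs_add_card_sameNbrs (v : V) (t : τ) :
    (diffNbrs G C v t).card + (sameNbrs G C v t).card = (occNbrs G C v).card := by
  classical
  have hsame : sameNbrs G C v t = (occNbrs G C v).filter (fun u => C u = some t) := by
    ext u; cases h : C u <;> simp [sameNbrs, occNbrs, h]
  have hdiff : diffNbrs G C v t = (occNbrs G C v).filter (fun u => ¬C u = some t) := by
    ext u; cases h : C u <;> simp [diffNbrs, occNbrs, h]
  rw [hsame, hdiff, add_comm, card_filter_add_card_filter_not]

lemma card_occNbrs_eq_sum [Fintype τ] (v : V) :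
    (occNbrs G C v).card = ∑ t, (sameNbrs G C v t).card := by
  classical
  rw [card_eq_sum_card_fiberwise (f := C) (t := univ) (fun _ _ => mem_coe.2 (mem_univ _)),
    Fintype.sum_option]
  have hnone : (occNbrs G C v).filter (fun u => C u = none) = ∅ := by
    ext u; cases h : C u <;> simp [occNbrs, h]
  rw [hnone, card_empty, zero_add]
  congr 1; ext t; congr 1; ext u; cases h : C u <;> simp [occNbrs, sameNbrs, h]

lemma sum_countType_mul_le_SW [Fintype τ] (f : τ → ℚ)
    (hf : ∀ u t, C u = some t → f t ≤ util G C u) :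
    ∑ t, (countType C t : ℚ) * f t ≤ SW G C := by
  classical
  calc ∑ t, (countType C t : ℚ) * f t = ∑ t, ∑ u with C u = some t, f t := by
        simp only [countType, sum_const, nsmul_eq_mul]
    _ ≤ ∑ t, ∑ u with C u = some t, util G C u :=
        sum_le_sum fun t _ => sum_le_sum fun u hu => hf u t (mem_filter.1 hu).2
    _ ≤ ∑ u with C u = none, util G C u + ∑ t, ∑ u with C u = some t, util G C u :=
        le_add_of_nonneg_left (sum_nonneg fun u _ => util_nonneg G C u)
    _ = SW G C := by rw [SW, ← sum_fiberwise univ C, Fintype.sum_option]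

variable [DecidableEq V]

omit [Fintype V] in
lemma move_apply_of_ne {u w y : V} (hy : y ≠ w) :
    move C u w y = if y = u then none else C y := by
  simp [move, hy]

lemma occNbrs_move (u w : V) :
    occNbrs G (move C u w) w = (occNbrs G C w).erase u := by
  ext y
  simp only [occNbrs, mem_filter, mem_univ, true_and, mem_erase]
  by_cases hadj : G.Adj w y
  · rw [move_apply_of_ne C (G.ne_of_adj hadj).symm]
    split_ifs with hyu <;> simp [hadj, hyu]
  · simp [hadj]

lemma diffNbrs_move (u w : V) (t : τ) :
    diffNbrs G (move C u w) w t = (diffNbrs G C w t).erase u := by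
  ext y
  simp only [diffNbrs, mem_filter, mem_univ, true_and, mem_erase]
  by_cases hadj : G.Adj w y
  · rw [move_apply_of_ne C (G.ne_of_adj hadj).symm]
    split_ifs with hyu <;> simp [hadj, hyu]
  · simp [hadj]

lemma util_move {u w : V} {t : τ} (hu : C u = some t) :
    util G (move C u w) w = (diffNbrs G C w t).card / ((occNbrs G C w).erase u).card := by
  have hu_notMem : u ∉ diffNbrs G C w t := by simp [diffNbrs, hu]
  rw [util_of_eq_some G _ (by simp [move, hu] : move C u w w = some t), occNbrs_move,
    diffNbrs_move, erase_eq_of_notMem hu_notMem]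

lemma IsEquil.util_move_le {u w : V} {t : τ} (h : IsEquil G C) (hu : C u = some t)
    (hw : C w = none) :
    ((diffNbrs G C w t).card : ℚ) / ((occNbrs G C w).erase u).card ≤ util G C u := by
  rw [← util_move G C hu]
  exact h u w (by simp [hu]) hw

end Jump

open Classical in
/-- counting inequality at an equilibrium with an empty node `v` having
`x_T` neighbors of each type `T` and `x = Σ_T x_T ≥ 2`. -/
theorem stmt7 {V τ : Type} [Fintype V] [DecidableEq V] [Fintype τ]
    (G : SimpleGraph V) (C : V → Option τ) (heq : IsEquil G C)
    (v : V) (hv : C v = none)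
    (xT : τ → ℕ)
    (hxT : ∀ t, xT t = (Finset.univ.filter (fun u => G.Adj v u ∧ C u = some t)).card)
    (x : ℕ) (hx : x = ∑ t, xT t) (hx2 : 2 ≤ x)
    (nT : τ → ℕ) (hnT : ∀ t, nT t = countType C t)
    (n : ℕ) (hn : n = ∑ t, nT t) :
    (∀ u t, C u = some t → G.Adj v u →
        ((x : ℚ) - (xT t : ℚ)) / ((x : ℚ) - 1) ≤ util G C u) ∧
    (∀ u t, C u = some t → ¬ G.Adj v u →
        ((x : ℚ) - (xT t : ℚ)) / (x : ℚ) ≤ util G C u) ∧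
    (n : ℚ) - (1 / (x : ℚ)) * ∑ t, (nT t : ℚ) * (xT t : ℚ) ≤ SW G C := by
  have hocc : (occNbrs G C v).card = x := by
    rw [hx, card_occNbrs_eq_sum]
    exact sum_congr rfl fun t _ => (hxT t).symm
  have hdiff (t : τ) : ((diffNbrs G C v t).card : ℚ) = x - xT t := by
    rw [eq_sub_iff_add_eq, hxT t]
    exact_mod_cast (card_diffNbrs_add_card_sameNbrs G C v t).trans hocc
  have hadj (u : V) (t : τ) (hu : C u = some t) (ha : G.Adj v u) :
      ((x : ℚ) - xT t) / ((x : ℚ) - 1) ≤ util G C u := by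
    have hmem : u ∈ occNbrs G C v := by simp [occNbrs, ha, hu]
    have := heq.util_move_le G C hu hv
    rwa [card_erase_of_mem hmem, hocc, hdiff, Nat.cast_sub (by omega), Nat.cast_one] at this
  have hnadj (u : V) (t : τ) (hu : C u = some t) (ha : ¬G.Adj v u) :
      ((x : ℚ) - xT t) / x ≤ util G C u := by
    have hmem : u ∉ occNbrs G C v := by simp [occNbrs, ha]
    have := heq.util_move_le G C hu hv
    rwa [erase_eq_of_notMem hmem, hocc, hdiff] at this
  refine ⟨hadj, hnadj, ?_⟩
  have hx1 : (1 : ℚ) < x := by exact_mod_cast hx2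
  have hbound (u : V) (t : τ) (hu : C u = some t) : ((x : ℚ) - xT t) / x ≤ util G C u := by
    by_cases ha : G.Adj v u
    · have hnum : (0 : ℚ) ≤ x - xT t := hdiff t ▸ Nat.cast_nonneg _
      exact (div_le_div_of_nonneg_left hnum (by linarith) (by linarith)).trans (hadj u t hu ha)
    · exact hnadj u t hu ha
  calc (n : ℚ) - (1 / (x : ℚ)) * ∑ t, (nT t : ℚ) * (xT t : ℚ)
      = ∑ t, (countType C t : ℚ) * (((x : ℚ) - xT t) / x) := by
        simp only [hn, hnT, Nat.cast_sum, mul_sum, ← sum_sub_distrib]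
        exact sum_congr rfl fun t _ => by field_simp
    _ ≤ SW G C := sum_countType_mul_le_SW G C _ hbound
end

section
/- On a spider graph, any improving move of an agent that involves neither the center node as source nor as target strictly decreases the potential Φ by at least m, where Φ uses edge weights 1 (same-type endpoints), m ∈ (0, 1/2) (one endpoint empty), and 0 (different-type endpoints). -/
open Finset

variable {V τ : Type}

/-!
Only edges at the source `u` and at the target `w` change weight. If `k`, `d` count the
occupied and the different-type neighbours of `u` before the jump, and `k'`, `d'` those of `w`
after it, the potential changes by `m k - (k - d) + (k' - d') - m k'`, while the utilities are
`d / k` and `d' / k'`. Off the center `k, k' ≤ 2`; and since `w` is the only empty node, `k = 0`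
forces `u` to be a leaf attached to `w`, so `k' ≤ 1`. The finitely many remaining cases all give
a change of at most `-m` once `m ≤ 1/2`.
-/

theorem sum_sum_eq_two_nsmul_of_symm {α M : Type*} [Fintype α] [DecidableEq α]
    [AddCommMonoid M] (s : Finset α) (f : α → α → M) (hsymm : ∀ x y, f x y = f y x)
    (hout : ∀ x ∉ s, ∀ y ∉ s, f x y = 0) (hin : ∀ x ∈ s, ∀ y ∈ s, f x y = 0) :
    ∑ x, ∑ y, f x y = 2 • ∑ x ∈ s, ∑ y, f x y := by
  have hcompl : ∑ x ∈ sᶜ, ∑ y, f x y = ∑ x ∈ s, ∑ y, f x y :=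
    calc ∑ x ∈ sᶜ, ∑ y, f x y = ∑ x ∈ sᶜ, ∑ y ∈ s, f y x := by
          refine sum_congr rfl fun x hx => ?_
          rw [← sum_add_sum_compl s, sum_eq_zero fun y hy =>
            hout x (mem_compl.1 hx) y (mem_compl.1 hy), add_zero]
          exact sum_congr rfl fun y _ => hsymm x y
      _ = ∑ y ∈ s, ∑ x ∈ sᶜ, f y x := sum_comm
      _ = ∑ y ∈ s, ∑ x, f y x := by
          refine sum_congr rfl fun y hy => ?_
          rw [← sum_add_sum_compl s, sum_eq_zero fun x hx => hin y hy x hx, zero_add]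
  rw [← sum_add_sum_compl s, hcompl, two_nsmul]

section

variable {G : SimpleGraph V} {C : V → Option τ} {u v w x y z : V} {t : τ}

theorem pw_of_left_eq_none (hx : C x = none) (m : ℚ) (y : V) : pw C m x y = m := by
  simp [pw, hx]

theorem pw_of_right_eq_none (hy : C y = none) (m : ℚ) (x : V) : pw C m x y = m := by
  simp [pw, hy]

theorem pw_comm (C : V → Option τ) (m : ℚ) (x y : V) : pw C m x y = pw C m y x := by
  unfold pw
  by_cases hxy : C x = C y
  · simp [hxy]
  · simp [hxy, Ne.symm hxy, or_comm]

open Classical in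
theorem pw_of_eq_some (hx : C x = some t) (hy : (C y).isSome) (m : ℚ) :
    pw C m x y = if C y = some t then 1 else 0 := by
  obtain ⟨s, hs⟩ := Option.isSome_iff_exists.mp hy
  simp [pw, hx, hs, eq_comm]

theorem pw_congr {C' : V → Option τ} (hx : C' x = C x) (hy : C' y = C y) (m : ℚ) :
    pw C' m x y = pw C m x y := by
  unfold pw
  rw [hx, hy]

theorem move_apply_target [DecidableEq V] (C : V → Option τ) (u w : V) : move C u w w = C u := by
  simp [move]

theorem move_apply_source [DecidableEq V] (C : V → Option τ) (huw : u ≠ w) : move C u w u = none := by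
  simp [move, huw]

theorem move_apply_of_ne_s16 [DecidableEq V] (C : V → Option τ) (hu : x ≠ u) (hw : x ≠ w) :
    move C u w x = C x := by
  simp [move, hu, hw]

variable [Fintype V]

open Classical in
theorem diffNbrs_eq_filter (G : SimpleGraph V) (C : V → Option τ) (v : V) (t : τ) :
    diffNbrs G C v t = (occNbrs G C v).filter (fun y => C y ≠ some t) := by
  ext y
  cases hy : C y <;> simp [diffNbrs, occNbrs, hy]

theorem card_diffNbrs_le (G : SimpleGraph V) (C : V → Option τ) (v : V) (t : τ) :
    #(diffNbrs G C v t) ≤ #(occNbrs G C v) := by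
  classical
  rw [diffNbrs_eq_filter]
  exact card_filter_le _ _

-- `x / 0 = 0` in `ℚ` agrees with the `if` in `util`, so no case split on an empty neighbourhood.
theorem util_eq_div (G : SimpleGraph V) (hv : C v = some t) :
    util G C v = #(diffNbrs G C v t) / #(occNbrs G C v) := by
  rw [util, hv]
  split_ifs with h <;> simp [h]

theorem sum_pw_occNbrs (G : SimpleGraph V) (hv : C v = some t) (m : ℚ) :
    ∑ y ∈ occNbrs G C v, pw C m v y = #(occNbrs G C v) - #(diffNbrs G C v t) := by
  classical
  have hsplit := card_filter_add_card_filter_not (s := occNbrs G C v) (fun y => C y = some t)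
  rw [sum_congr rfl fun y hy => pw_of_eq_some hv (mem_filter.1 hy).2.2 m, sum_boole,
    diffNbrs_eq_filter, ← hsplit]
  push_cast
  ring

theorem eq_of_emptyCount_eq_one (hone : emptyCount C = 1) (hw : C w = none) (hy : C y = none) :
    y = w :=
  card_le_one.1 hone.le y (by simp [hy]) w (by simp [hw])

theorem adj_of_occNbrs_eq_empty (hempty : ∀ y, C y = none → y = w) (hadj : G.Adj v y)
    (hocc : occNbrs G C v = ∅) : G.Adj v w := by
  have hy : y ∉ occNbrs G C v := hocc ▸ notMem_empty y
  simp only [occNbrs, mem_filter, mem_univ, true_and, not_and, Option.not_isSome_iff_eq_none]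
    at hy
  exact hempty y (hy hadj) ▸ hadj

section Degree

variable [DecidableRel G.Adj]

theorem occNbrs_subset_neighborFinset (C : V → Option τ) (v : V) :
    occNbrs G C v ⊆ G.neighborFinset v := by
  intro y hy
  simp only [occNbrs, mem_filter, mem_univ, true_and] at hy
  simpa using hy.1

theorem card_occNbrs_le_degree (C : V → Option τ) (v : V) : #(occNbrs G C v) ≤ G.degree v := by
  rw [← G.card_neighborFinset_eq_degree]
  exact card_le_card (occNbrs_subset_neighborFinset C v)

theorem card_occNbrs_lt_degree (hz : C z = none) (hadj : G.Adj v z) :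
    #(occNbrs G C v) < G.degree v := by
  rw [← G.card_neighborFinset_eq_degree]
  refine card_lt_card ((ssubset_iff_of_subset (occNbrs_subset_neighborFinset C v)).2 ⟨z, ?_, ?_⟩)
  · simpa using hadj
  · simp [occNbrs, hz]

end Degree

variable [DecidableEq V]

theorem potential_move_sub (G : SimpleGraph V) (m : ℚ) (hu : (C u).isSome)
    (hw : C w = none) :
    potential G (move C u w) m - potential G C m =
      ∑ y ∈ occNbrs G C u, (m - pw C m u y) +
        ∑ y ∈ occNbrs G (move C u w) w, (pw (move C u w) m w y - m) := by
  classical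
  have huw : u ≠ w := by rintro rfl; simp [hw] at hu
  set C' := move C u w
  have hC'u : C' u = none := move_apply_source C huw
  set g : V → V → ℚ := fun x y => if G.Adj x y then pw C' m x y - pw C m x y else 0
  have hpotential : potential G C' m - potential G C m = (∑ x, ∑ y, g x y) / 2 := by
    rw [potential, potential, ← sub_div, ← sum_sub_distrib, ← Fintype.sum_prod_type']
    congr 1
    refine sum_congr rfl fun p _ => ?_
    split_ifs <;> simp [g, *]
  have hsymm : ∀ x y, g x y = g y x := fun x y => by
    simp only [g, G.adj_comm x y, pw_comm C' m x y, pw_comm C m x y]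
  have hout : ∀ x ∉ ({u, w} : Finset V), ∀ y ∉ ({u, w} : Finset V), g x y = 0 := by
    intro x hx y hy
    simp only [mem_insert, mem_singleton, not_or] at hx hy
    have hpw : pw C' m x y = pw C m x y :=
      pw_congr (move_apply_of_ne_s16 C hx.1 hx.2) (move_apply_of_ne_s16 C hy.1 hy.2) m
    simp only [g, hpw, sub_self, ite_self]
  have hin : ∀ x ∈ ({u, w} : Finset V), ∀ y ∈ ({u, w} : Finset V), g x y = 0 := by
    have huw' : g u w = 0 := by simp [g, pw_of_left_eq_none hC'u, pw_of_right_eq_none hw]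
    have hwu' : g w u = 0 := hsymm w u ▸ huw'
    intro x hx y hy
    simp only [mem_insert, mem_singleton] at hx hy
    rcases hx with rfl | rfl <;> rcases hy with rfl | rfl <;> simp [g, huw', hwu']
  have hrow_u : ∑ y, g u y = ∑ y ∈ occNbrs G C u, (m - pw C m u y) := by
    rw [occNbrs, sum_filter]
    refine sum_congr rfl fun y _ => ?_
    cases hy : C y with
    | none => simp [g, pw_of_left_eq_none hC'u, pw_of_right_eq_none hy]
    | some s => simp [g, pw_of_left_eq_none hC'u]
  have hrow_w : ∑ y, g w y = ∑ y ∈ occNbrs G C' w, (pw C' m w y - m) := by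
    rw [occNbrs, sum_filter]
    refine sum_congr rfl fun y _ => ?_
    cases hy : C' y with
    | none => simp [g, pw_of_left_eq_none hw, pw_of_right_eq_none hy]
    | some s => simp [g, pw_of_left_eq_none hw]
  rw [hpotential, sum_sum_eq_two_nsmul_of_symm {u, w} g hsymm hout hin, sum_pair huw, hrow_u,
    hrow_w, two_nsmul]
  ring

theorem potential_move_sub_eq (G : SimpleGraph V) (m : ℚ) (hu : C u = some t)
    (hw : C w = none) :
    potential G (move C u w) m - potential G C m =
      m * #(occNbrs G C u) - (#(occNbrs G C u) - #(diffNbrs G C u t)) +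
        (#(occNbrs G (move C u w) w) - #(diffNbrs G (move C u w) w t)) -
          m * #(occNbrs G (move C u w) w) := by
  rw [potential_move_sub G m (by simp [hu]) hw, sum_sub_distrib, sum_sub_distrib, sum_const,
    sum_const, sum_pw_occNbrs G hu, sum_pw_occNbrs G ((move_apply_target C u w).trans hu),
    nsmul_eq_mul, nsmul_eq_mul]
  ring

end

theorem potential_change_le_neg_of_div_lt {m : ℚ} (hm : m ≤ 1 / 2) {k d k' d' : ℕ} (hk : k ≤ 2)
    (hk' : k' ≤ 2) (hd : d ≤ k) (hd' : d' ≤ k') (hk0 : k = 0 → k' ≤ 1)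
    (hlt : (d : ℚ) / k < d' / k') :
    m * k - (k - d) + (k' - d') - m * k' ≤ -m := by
  interval_cases k <;> interval_cases k' <;> (try omega) <;> interval_cases d <;>
    interval_cases d' <;> norm_num at hlt <;> push_cast <;> linarith

open Classical in
theorem stmt16_general {V τ : Type} [Fintype V] [DecidableEq V]
    (G : SimpleGraph V) (hconn : G.Connected)
    (c : V) (hother : ∀ v, v ≠ c → G.degree v ≤ 2)
    (m : ℚ) (hm1 : m < 1 / 2)
    (C : V → Option τ) (hone : emptyCount C = 1)
    (u w : V) (hu : u ≠ c) (hw : w ≠ c) (h : Improves G C u w) :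
    potential G (move C u w) m ≤ potential G C m - m := by
  obtain ⟨hCu, hCw, hlt⟩ := h
  obtain ⟨t, ht⟩ := Option.isSome_iff_exists.mp hCu
  have huw : u ≠ w := by rintro rfl; simp [hCw] at ht
  have ht' : move C u w w = some t := (move_apply_target C u w).trans ht
  rw [util_eq_div G ht, util_eq_div G ht'] at hlt
  have hsource : #(occNbrs G C u) = 0 → #(occNbrs G (move C u w) w) ≤ 1 := by
    intro hk
    have : Nontrivial V := nontrivial_of_ne u c hu
    obtain ⟨y, hy⟩ := hconn.preconnected.exists_adj_of_nontrivial u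
    have hadj : G.Adj u w := adj_of_occNbrs_eq_empty
      (fun _ => eq_of_emptyCount_eq_one hone hCw) hy (card_eq_zero.1 hk)
    have := card_occNbrs_lt_degree (move_apply_source C huw) hadj.symm
    have := hother w hw
    omega
  have := potential_change_le_neg_of_div_lt hm1.le
    ((card_occNbrs_le_degree C u).trans (hother u hu))
    ((card_occNbrs_le_degree _ w).trans (hother w hw))
    (card_diffNbrs_le G C u t) (card_diffNbrs_le G _ w t) hsource hlt
  linarith [potential_move_sub_eq G m ht hCw]

open Classical in
/-- On a spider graph (a tree with a unique node `c` of degree ≥ 3) with a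
single empty node, any improving move involving neither the center as source nor target
decreases the potential (with weights 1/m/0, m ∈ (0,1/2)) by at least `m`. -/
theorem stmt16 {V τ : Type} [Fintype V] [DecidableEq V]
    (G : SimpleGraph V) (hconn : G.Connected) (hac : G.IsAcyclic)
    (c : V) (hc : 3 ≤ G.degree c) (hother : ∀ v, v ≠ c → G.degree v ≤ 2)
    (m : ℚ) (hm0 : 0 < m) (hm1 : m < 1 / 2)
    (C : V → Option τ) (hone : emptyCount C = 1)
    (u w : V) (hu : u ≠ c) (hw : w ≠ c) (h : Improves G C u w) :
    potential G (move C u w) m ≤ potential G C m - m :=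
  stmt16_general G hconn c hother m hm1 C hone u w hu hw h
end
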